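/- In the conflict analysis loop based on the First-UIP scheme, each resolution step strictly decreases (with respect to a well-founded order) the multiset of positions in the assignment A of the literals of the current nogood δ that lie at the current decision level; hence conflict resolution terminates. -/

import Mathlib

inductive Lit (V : Type) where
  | pos : V → Lit V
  | neg : V → Lit V
deriving DecidableEq

def Lit.compl {V : Type} : Lit V → Lit V
  | .pos v => .neg v
  | .neg v => .pos v

def Lit.var {V : Type} : Lit V → V
  | .pos v => v
  | .neg v => v

variable {V : Type} [DecidableEq V]

/-- `σ` is the literal of `δ` occurring last in the assignment `A`. -/
def IsLast (A : List (Lit V)) (δ : Finset (Lit V)) (σ : Lit V) : Prop :=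
  σ ∈ δ ∧ σ ∈ A ∧ ∀ τ ∈ δ, A.idxOf τ ≤ A.idxOf σ

/-- `ε` is an antecedent of `σ`: `σ̄ ∈ ε` and every other literal of `ε`
occurs in `A` strictly before `σ`. -/
def Antecedent (A : List (Lit V)) (σ : Lit V) (ε : Finset (Lit V)) : Prop :=
  σ.compl ∈ ε ∧ ∀ τ ∈ ε, τ ≠ σ.compl → τ ∈ A ∧ A.idxOf τ < A.idxOf σ

/-- One conflict resolution step of the First-UIP scheme at decision level `d`:
the last literal `σ` of the current nogood `δ` is at level `d`, it is not the
unique literal of `δ` at that level, each literal of the chosen antecedent `ε`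
has level `≤ dl σ`, and `δ` is replaced by the resolvent. -/
def Step (A : List (Lit V)) (dl : Lit V → ℕ) (d : ℕ)
    (δ δ' : Finset (Lit V)) : Prop :=
  ∃ σ ε, IsLast A δ σ ∧ dl σ = d ∧ (∀ τ ∈ δ, τ ∈ A) ∧
    (∃ τ ∈ δ, τ ≠ σ ∧ dl τ = dl σ) ∧
    Antecedent A σ ε ∧ (∀ τ ∈ ε, τ ≠ σ.compl → dl τ ≤ dl σ) ∧
    δ' = δ.erase σ ∪ ε.erase σ.compl

/-- The multiset of positions in `A` of the literals of `δ` lying at decision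
level `d`. -/
def posns (A : List (Lit V)) (dl : Lit V → ℕ) (d : ℕ) (δ : Finset (Lit V)) :
    Multiset ℕ :=
  (δ.filter (fun τ => dl τ = d)).val.map (fun τ => A.idxOf τ)

/-- The Dershowitz–Manna order on multisets of naturals (well-founded). -/
def DMlt (M N : Multiset ℕ) : Prop :=
  ∃ X Y Z : Multiset ℕ, X ≠ 0 ∧ N = Z + X ∧ M = Z + Y ∧ ∀ y ∈ Y, ∃ x ∈ X, y < x

/-!
Only the literals at the current level matter. A resolution step removes the last literal `σ`
of the nogood and adds literals of its antecedent, all of which occur strictly before `σ` in the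
assignment. On positions at the current level this replaces one entry by finitely many strictly
smaller ones, which is a Dershowitz–Manna descent; that order is well-founded because `<` on `ℕ` is.
-/

lemma dMlt_eq_isDershowitzMannaLT : DMlt = Multiset.IsDershowitzMannaLT := by
  ext M N
  exact ⟨fun ⟨X, Y, Z, hX, hN, hM, hY⟩ => ⟨Z, Y, X, hX, hM, hN, hY⟩,
    fun ⟨X, Y, Z, hZ, hM, hN, hY⟩ => ⟨Z, Y, X, hZ, hN, hM, hY⟩⟩

lemma wellFounded_dMlt : WellFounded DMlt :=
  dMlt_eq_isDershowitzMannaLT ▸ Multiset.wellFounded_isDershowitzMannaLT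

lemma dMlt_add_of_forall_lt {Z Y : Multiset ℕ} {p : ℕ} (hY : ∀ y ∈ Y, y < p) :
    DMlt (Z + Y) (Z + {p}) :=
  ⟨{p}, Y, Z, Multiset.singleton_ne_zero p, rfl, rfl,
    fun y hy => ⟨p, Multiset.mem_singleton_self p, hY y hy⟩⟩

section posns

variable (A : List (Lit V)) (dl : Lit V → ℕ) (d : ℕ)

lemma posns_union (s t : Finset (Lit V)) :
    posns A dl d (s ∪ t) = posns A dl d s + posns A dl d (t \ s) := by
  rw [← Finset.union_sdiff_self_eq_union, ← Finset.disjUnion_eq_union _ _ Finset.disjoint_sdiff]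
  simp only [posns, Finset.filter_disjUnion, Finset.disjUnion_val, Multiset.map_add]

lemma posns_insert {σ : Lit V} {s : Finset (Lit V)} (hσ : σ ∉ s) (hσd : dl σ = d) :
    posns A dl d (insert σ s) = posns A dl d s + {A.idxOf σ} := by
  have hσ' : σ ∉ s.filter (fun τ => dl τ = d) := fun h => hσ (Finset.mem_filter.1 h).1
  rw [posns, posns, Finset.filter_insert, if_pos hσd, Finset.insert_val,
    Multiset.ndinsert_of_notMem hσ', Multiset.map_cons, ← Multiset.singleton_add, add_comm]

lemma lt_of_mem_posns {s : Finset (Lit V)} {p y : ℕ} (hs : ∀ τ ∈ s, A.idxOf τ < p)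
    (hy : y ∈ posns A dl d s) : y < p := by
  obtain ⟨τ, hτ, rfl⟩ := Multiset.mem_map.1 hy
  exact hs τ (Finset.mem_filter.1 hτ).1

end posns

lemma Step.dMlt_posns {A : List (Lit V)} {dl : Lit V → ℕ} {d : ℕ} {δ δ' : Finset (Lit V)}
    (h : Step A dl d δ δ') : DMlt (posns A dl d δ') (posns A dl d δ) := by
  obtain ⟨σ, ε, ⟨hσδ, -, -⟩, hσd, -, -, ⟨-, hante⟩, -, rfl⟩ := h
  have hold : posns A dl d δ = posns A dl d (δ.erase σ) + {A.idxOf σ} := by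
    rw [← posns_insert A dl d (Finset.notMem_erase σ δ) hσd, Finset.insert_erase hσδ]
  have hbefore : ∀ τ ∈ ε.erase σ.compl \ δ.erase σ, A.idxOf τ < A.idxOf σ := fun τ hτ =>
    have hτε := (Finset.mem_sdiff.1 hτ).1
    (hante τ (Finset.mem_of_mem_erase hτε) (Finset.ne_of_mem_erase hτε)).2
  rw [hold, posns_union]
  exact dMlt_add_of_forall_lt fun y hy => lt_of_mem_posns A dl d hbefore hy

theorem stmt7_general (A : List (Lit V)) (dl : Lit V → ℕ) (d : ℕ) :
    (∀ δ δ' : Finset (Lit V), Step A dl d δ δ' →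
        DMlt (posns A dl d δ') (posns A dl d δ)) ∧
    WellFounded DMlt ∧
    WellFounded (fun δ' δ : Finset (Lit V) => Step A dl d δ δ') :=
  ⟨fun _ _ h => h.dMlt_posns, wellFounded_dMlt,
    Subrelation.wf Step.dMlt_posns (InvImage.wf (posns A dl d) wellFounded_dMlt)⟩

/-- in First-UIP conflict analysis over a consistent assignment
`A` (no variable assigned twice, decision levels nondecreasing along `A`),
every resolution step strictly decreases, in the well-founded Dershowitz–Manna
order, the multiset of positions of the current nogood's literals at the
current decision level `d`; hence conflict resolution terminates, i.e. the
step relation is well-founded. -/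
theorem stmt7 (A : List (Lit V)) (dl : Lit V → ℕ) (d : ℕ)
    (hnd : (A.map Lit.var).Nodup)
    (hcons : ∀ l ∈ A, l.compl ∉ A)
    (hmono : A.Pairwise (fun a b => dl a ≤ dl b)) :
    (∀ δ δ' : Finset (Lit V), Step A dl d δ δ' →
        DMlt (posns A dl d δ') (posns A dl d δ)) ∧
    WellFounded DMlt ∧
    WellFounded (fun δ' δ : Finset (Lit V) => Step A dl d δ δ') :=
  stmt7_general A dl d
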